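/- The q-analogue recurrence: define T_{n,q}(2a) by T_{n,q}(0) = 1 and T_{n,q}(2a) = -\sum_{b=0}^{a-1} \binom{n-2b}{2a-2b}_q T_{n,q}(2b). Then T_{n,q}(2a) = (-1)^a ([n]_q!/[n-2a]_q!) \Delta_{a,q}. -/

import Mathlib

noncomputable def qInt {K : Type*} [Field K] (q : K) (m : ℕ) : K :=
  ∑ i ∈ Finset.range m, q ^ i

noncomputable def qFact {K : Type*} [Field K] (q : K) : ℕ → K
  | 0 => 1
  | m + 1 => qFact q m * qInt q (m + 1)

noncomputable def qBinom {K : Type*} [Field K] (q : K) (n k : ℕ) : K :=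
  qFact q n / (qFact q k * qFact q (n - k))

/-- Determinant of the `n × n` lower Hessenberg matrix with `(i,j)` entry `1` if `j = i+1`,
`0` if `j > i+1`, and `f (i-j)` if `j ≤ i`. -/
noncomputable def hessDet {K : Type*} [Field K] (f : ℕ → K) (n : ℕ) : K :=
  Matrix.det (Matrix.of fun i j : Fin n =>
    if (j : ℕ) = (i : ℕ) + 1 then 1
    else if (i : ℕ) + 1 < (j : ℕ) then 0
    else f ((i : ℕ) - (j : ℕ)))

/-- `Δ_{a,q}` in `ℚ(q)` with `q = X`. -/
noncomputable def DeltaQ (a : ℕ) : RatFunc ℚ :=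
  hessDet (fun k => (qFact (RatFunc.X : RatFunc ℚ) (2 * k + 2))⁻¹) a

/-!
Expanding the Hessenberg determinant along its last row gives
`Δ_{a+1} = ∑_{j ≤ a} (-1)^(a+j) Δ_j / [2(a-j)+2]_q!`. Since
`[n-2b choose 2a-2b]_q · [n]_q!/[n-2b]_q! = [n]_q! / ([n-2a]_q! [2a-2b]_q!)`, multiplying this
expansion by `(-1)^(a+1) [n]_q!/[n-2a-2]_q!` turns it into the recurrence defining `T`, so the
closed form follows by strong induction on `a`. All `q`-factorials are nonzero in `ℚ(q)`.
-/

section Hessenberg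

variable {K : Type*} [Field K]

noncomputable def hessEntry (f : ℕ → K) (r c : ℕ) : K :=
  if c = r + 1 then 1 else if r + 1 < c then 0 else f (r - c)

noncomputable def hessMatrix (f : ℕ → K) (m : ℕ) : Matrix (Fin m) (Fin m) K :=
  Matrix.of fun r c => hessEntry f r c

/-- The minor of `hessMatrix f (a + 1)` with its last row and its column `j` removed. -/
noncomputable def hessMinor (f : ℕ → K) (a j : ℕ) : Matrix (Fin a) (Fin a) K :=
  Matrix.of fun r c => hessEntry f r (if (c : ℕ) < j then c else c + 1)

lemma hessDet_eq_det_hessMatrix (f : ℕ → K) (m : ℕ) : hessDet f m = (hessMatrix f m).det := rfl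

lemma hessMinor_self (f : ℕ → K) (a : ℕ) : hessMinor f a a = hessMatrix f a := by
  ext r c
  simp [hessMinor, hessMatrix]

lemma hessMinor_succ_submatrix_castSucc (f : ℕ → K) (a j : ℕ) :
    (hessMinor f (a + 1) j).submatrix Fin.castSucc Fin.castSucc = hessMinor f a j := by
  ext r c
  simp [hessMinor]

lemma hessMinor_succ_apply_last {f : ℕ → K} {a j : ℕ} (hj : j ≤ a) (r : Fin (a + 1)) :
    hessMinor f (a + 1) j r (Fin.last a) = if r = Fin.last a then 1 else 0 := by
  have hr : (r : ℕ) ≤ a := Nat.lt_succ_iff.mp r.isLt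
  simp only [hessMinor, Matrix.of_apply, Fin.val_last, if_neg (show ¬ a < j by omega), hessEntry,
    Fin.ext_iff]
  split_ifs <;> first | rfl | omega

lemma det_hessMinor {f : ℕ → K} {a j : ℕ} (hj : j ≤ a) : (hessMinor f a j).det = hessDet f j := by
  induction a with
  | zero => rw [Nat.le_zero.mp hj, hessMinor_self, hessDet_eq_det_hessMatrix]
  | succ a ih =>
    rcases hj.eq_or_lt with rfl | hlt
    · rw [hessMinor_self, hessDet_eq_det_hessMatrix]
    · have hj : j ≤ a := Nat.lt_succ_iff.mp hlt
      rw [Matrix.det_succ_column _ (Fin.last a), Finset.sum_eq_single (Fin.last a)]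
      · rw [hessMinor_succ_apply_last hj, if_pos rfl, Fin.succAbove_last,
          hessMinor_succ_submatrix_castSucc, ih hj]
        simp
      · intro r _ hr
        rw [hessMinor_succ_apply_last hj, if_neg hr, mul_zero, zero_mul]
      · simp

lemma hessMatrix_submatrix_last_succAbove (f : ℕ → K) (a : ℕ) (j : Fin (a + 1)) :
    (hessMatrix f (a + 1)).submatrix (Fin.last a).succAbove j.succAbove = hessMinor f a j := by
  ext r c
  simp only [Fin.succAbove_last, Matrix.submatrix_apply, hessMatrix, hessMinor, Matrix.of_apply,
    Fin.val_castSucc]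
  congr 1
  rcases lt_or_ge (c : ℕ) j with h | h
  · rw [Fin.succAbove_of_castSucc_lt _ _ (by simpa [Fin.lt_def] using h), if_pos h]
    simp
  · rw [Fin.succAbove_of_le_castSucc _ _ (by simpa [Fin.le_def] using h), if_neg (by omega)]
    simp

lemma hessDet_succ (f : ℕ → K) (a : ℕ) :
    hessDet f (a + 1) =
      ∑ j ∈ Finset.range (a + 1), (-1 : K) ^ (a + j) * f (a - j) * hessDet f j := by
  rw [hessDet_eq_det_hessMatrix, Matrix.det_succ_row _ (Fin.last a),
    ← Fin.sum_univ_eq_sum_range (fun j => (-1 : K) ^ (a + j) * f (a - j) * hessDet f j)]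
  refine Finset.sum_congr rfl fun j _ => ?_
  have hj : (j : ℕ) ≤ a := Nat.lt_succ_iff.mp j.isLt
  have hlast : hessMatrix f (a + 1) (Fin.last a) j = f (a - j) := by
    simp only [hessMatrix, Matrix.of_apply, hessEntry, Fin.val_last]
    rw [if_neg (by omega), if_neg (by omega)]
  rw [hlast, hessMatrix_submatrix_last_succAbove, det_hessMinor hj, Fin.val_last]

end Hessenberg

lemma DeltaQ_zero : DeltaQ 0 = 1 := Matrix.det_fin_zero

lemma DeltaQ_succ (a : ℕ) :
    DeltaQ (a + 1) = ∑ j ∈ Finset.range (a + 1),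
      (-1) ^ (a + j) * (qFact (RatFunc.X : RatFunc ℚ) (2 * (a - j) + 2))⁻¹ * DeltaQ j :=
  hessDet_succ _ a

lemma qInt_X_ne_zero {K : Type*} [Field K] {m : ℕ} (hm : m ≠ 0) :
    qInt (RatFunc.X : RatFunc K) m ≠ 0 := by
  have hpoly : (∑ i ∈ Finset.range m, Polynomial.X ^ i : Polynomial K) ≠ 0 := by
    intro h
    have h0 := congrArg (Polynomial.coeff · 0) h
    simp [Polynomial.coeff_X_pow, Nat.pos_of_ne_zero hm] at h0
  simpa [qInt, RatFunc.algebraMap_X] using RatFunc.algebraMap_ne_zero hpoly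

lemma qFact_X_ne_zero {K : Type*} [Field K] (m : ℕ) : qFact (RatFunc.X : RatFunc K) m ≠ 0 := by
  induction m with
  | zero => simp [qFact]
  | succ m ih => exact mul_ne_zero ih (qInt_X_ne_zero m.succ_ne_zero)

lemma qBinom_sub_mul_qFact_div {K : Type*} [Field K] {q : K} {k m n : ℕ} (hk : k ≤ m)
    (hm : m ≤ n) (h : qFact q (n - k) ≠ 0) :
    qBinom q (n - k) (m - k) * (qFact q n / qFact q (n - k)) =
      qFact q n / qFact q (n - m) / qFact q (m - k) := by
  rw [qBinom, show n - k - (m - k) = n - m by omega]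
  field_simp

lemma neg_one_pow_succ_mul_neg_one_pow_add {R : Type*} [Ring R] (a b : ℕ) :
    (-1 : R) ^ (a + 1) * (-1) ^ (a + b) = -(-1) ^ b := by
  rw [← pow_add, show a + 1 + (a + b) = 2 * a + b + 1 by ring, pow_succ, pow_add, pow_mul]
  simp

/-- If `T 0 = 1` and `T_{n,q}(2a) = -∑_{b=0}^{a-1} [n-2b choose 2a-2b]_q T_{n,q}(2b)`
(here `T a` denotes `T_{n,q}(2a)`), then `T_{n,q}(2a) = (-1)^a ([n]_q!/[n-2a]_q!) Δ_{a,q}`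
for all `2a ≤ n`, working over `ℚ(q)`. -/
theorem stmt11 (n : ℕ) (T : ℕ → RatFunc ℚ) (h0 : T 0 = 1)
    (hrec : ∀ a : ℕ, 1 ≤ a →
      T a = -∑ b ∈ Finset.range a, qBinom (RatFunc.X : RatFunc ℚ) (n - 2 * b) (2 * a - 2 * b) * T b)
    (a : ℕ) (ha : 2 * a ≤ n) :
    T a = (-1) ^ a * (qFact (RatFunc.X : RatFunc ℚ) n / qFact (RatFunc.X : RatFunc ℚ) (n - 2 * a)) *
      DeltaQ a := by
  induction a using Nat.strong_induction_on with
  | _ a ih =>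
  rcases a with _ | a
  · rw [h0, DeltaQ_zero, pow_zero, Nat.mul_zero, Nat.sub_zero, div_self (qFact_X_ne_zero n)]
    ring
  rw [hrec _ a.succ_pos, DeltaQ_succ, Finset.mul_sum, ← Finset.sum_neg_distrib]
  refine Finset.sum_congr rfl fun b hb => ?_
  have hb : b ≤ a := Nat.lt_succ_iff.mp (Finset.mem_range.mp hb)
  have hcoeff := qBinom_sub_mul_qFact_div (q := (RatFunc.X : RatFunc ℚ)) (k := 2 * b)
    (m := 2 * (a + 1)) (by omega) ha (qFact_X_ne_zero _)
  rw [ih b (by omega) (by omega), show 2 * (a - b) + 2 = 2 * (a + 1) - 2 * b by omega]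
  linear_combination (-(-1) ^ b * DeltaQ b) * hcoeff -
    (qFact RatFunc.X n / qFact RatFunc.X (n - 2 * (a + 1)) /
      qFact (RatFunc.X : RatFunc ℚ) (2 * (a + 1) - 2 * b) * DeltaQ b) *
    neg_one_pow_succ_mul_neg_one_pow_add (R := RatFunc ℚ) a b
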